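/- For every pair of nonzero integers (v1, v2), the value ML(v1, v2) belongs to the set {1/2} ∪ {s/(2s+1) : s ∈ ℕ, s ≥ 1}; conversely, every element of this set is achieved. Equivalently, S̃(2) = {1/2} ∪ {s/(2s+1) : s ≥ 1}. -/

import Mathlib

/-- Distance from a real number to the nearest integer. -/
noncomputable def distToInt (x : ℝ) : ℝ := ⨅ m : ℤ, |x - m|

/-- Maximum loneliness of a tuple of speeds. -/
noncomputable def ML {n : ℕ} (v : Fin n → ℤ) : ℝ :=
  ⨆ t : ℝ, ⨅ i : Fin n, distToInt (t * v i)

/-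
Rescaling `t` and taking absolute values reduces to coprime speeds `a, b > 0`. If both are odd,
`t = 1/2` makes both runners lonely at distance `1/2`. Otherwise `k = a + b = 2s + 1` is odd. If
`‖ta‖` and `‖tb‖` both exceeded `s/k = 1/2 - 1/(2k)`, then `2ta` and `2tb` would lie within `1/k` of
odd integers `P` and `Q`, and the odd integer `bP - aQ = a(2tb - Q) - b(2ta - P)` would have modulus
`< 1`. The bound `s/k` is attained at `t = j/k` with `ja ≡ s (mod k)`, where
`‖tb‖ = ‖j - ta‖ = ‖ta‖`.
-/

theorem distToInt_le_abs_sub (x : ℝ) (m : ℤ) : distToInt x ≤ |x - m| :=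
  ciInf_le ⟨0, by rintro _ ⟨k, rfl⟩; positivity⟩ m

theorem distToInt_eq_abs_sub_round (x : ℝ) : distToInt x = |x - round x| :=
  le_antisymm (distToInt_le_abs_sub x _) (le_ciInf (round_le x))

theorem distToInt_le_half (x : ℝ) : distToInt x ≤ 1 / 2 :=
  (distToInt_eq_abs_sub_round x).trans_le (abs_sub_round x)

theorem distToInt_add_intCast (x : ℝ) (m : ℤ) : distToInt (x + m) = distToInt x := by
  simp only [distToInt_eq_abs_sub_round, round_add_intCast, Int.cast_add, add_sub_add_right_eq_sub]

theorem distToInt_neg (x : ℝ) : distToInt (-x) = distToInt x := by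
  have h (y : ℝ) : distToInt (-y) ≤ distToInt y :=
    calc distToInt (-y) ≤ |-y - ((-round y : ℤ) : ℝ)| := distToInt_le_abs_sub _ _
      _ = distToInt y := by rw [distToInt_eq_abs_sub_round, ← abs_neg]; push_cast; ring_nf
  exact le_antisymm (h x) (by simpa using h (-x))

theorem distToInt_intCast_sub (m : ℤ) (x : ℝ) : distToInt (m - x) = distToInt x := by
  rw [sub_eq_neg_add, distToInt_add_intCast, distToInt_neg]

theorem distToInt_of_nonneg_of_le_half {x : ℝ} (h0 : 0 ≤ x) (h1 : x ≤ 1 / 2) :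
    distToInt x = x := by
  refine le_antisymm (by simpa [abs_of_nonneg h0] using distToInt_le_abs_sub x 0)
    (le_ciInf fun m => ?_)
  rcases le_or_gt m 0 with hm | hm
  · have : (m : ℝ) ≤ 0 := by exact_mod_cast hm
    exact (by linarith : x ≤ x - m).trans (le_abs_self _)
  · have : (1 : ℝ) ≤ m := by exact_mod_cast hm
    exact (by linarith : x ≤ -(x - m)).trans (neg_le_abs _)

theorem distToInt_mul_abs (t : ℝ) (m : ℤ) : distToInt (t * |m|) = distToInt (t * m) := by
  rcases abs_choice m with h | h <;> rw [h]
  push_cast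
  rw [mul_neg, distToInt_neg]

theorem exists_odd_abs_two_mul_sub_lt {x ε : ℝ} (h : 1 / 2 - ε / 2 < distToInt x) :
    ∃ P : ℤ, Odd P ∧ |2 * x - P| < ε := by
  rw [distToInt_eq_abs_sub_round] at h
  have hhalf := abs_sub_round x
  rcases le_or_gt 0 (x - round x) with hx | hx
  · refine ⟨2 * round x + 1, odd_two_mul_add_one _, ?_⟩
    rw [abs_of_nonneg hx] at h hhalf
    rw [abs_lt]; push_cast; constructor <;> linarith
  · refine ⟨2 * round x - 1, ⟨round x - 1, by ring1⟩, ?_⟩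
    rw [abs_of_neg hx] at h hhalf
    rw [abs_lt]; push_cast; constructor <;> linarith

theorem min_distToInt_mul_le {a b : ℤ} (hab : Odd (a + b)) (t : ℝ) :
    min (distToInt (t * a)) (distToInt (t * b)) ≤ 1 / 2 - 1 / (2 * (|(a : ℝ)| + |(b : ℝ)|)) := by
  set k : ℝ := |(a : ℝ)| + |(b : ℝ)|
  have hk : 0 < k := by
    have : a ≠ 0 ∨ b ≠ 0 := by
      by_contra! h
      simp [h.1, h.2] at hab
    rcases this with h | h <;> positivity
  by_contra! h
  rw [lt_min_iff, show 1 / 2 - 1 / (2 * k) = 1 / 2 - k⁻¹ / 2 by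
    rw [mul_comm, ← div_div, one_div k]] at h
  obtain ⟨P, ⟨p, rfl⟩, hP⟩ := exists_odd_abs_two_mul_sub_lt h.1
  obtain ⟨Q, ⟨q, rfl⟩, hQ⟩ := exists_odd_abs_two_mul_sub_lt h.2
  obtain ⟨r, hr⟩ := hab
  have hodd : b * (2 * p + 1) - a * (2 * q + 1) = 2 * (b * p - a * q - a + r) + 1 := by
    linear_combination hr
  have hsmall : |((b * (2 * p + 1) - a * (2 * q + 1) : ℤ) : ℝ)| < 1 := by
    have hmax : max |2 * (t * a) - ((2 * p + 1 : ℤ) : ℝ)| |2 * (t * b) - ((2 * q + 1 : ℤ) : ℝ)|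
        < k⁻¹ := max_lt hP hQ
    calc |((b * (2 * p + 1) - a * (2 * q + 1) : ℤ) : ℝ)|
        = |(a : ℝ) * (2 * (t * b) - ((2 * q + 1 : ℤ) : ℝ))
            - b * (2 * (t * a) - ((2 * p + 1 : ℤ) : ℝ))| := by push_cast; ring_nf
      _ ≤ |(a : ℝ)| * |2 * (t * b) - ((2 * q + 1 : ℤ) : ℝ)|
            + |(b : ℝ)| * |2 * (t * a) - ((2 * p + 1 : ℤ) : ℝ)| := by
        rw [← abs_mul, ← abs_mul]; exact abs_sub _ _
      _ ≤ k * max |2 * (t * a) - ((2 * p + 1 : ℤ) : ℝ)| |2 * (t * b) - ((2 * q + 1 : ℤ) : ℝ)| := by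
        rw [add_mul]
        gcongr
        exacts [le_max_right _ _, le_max_left _ _]
      _ < k * k⁻¹ := by gcongr
      _ = 1 := mul_inv_cancel₀ hk.ne'
  have hzero : b * (2 * p + 1) - a * (2 * q + 1) = 0 :=
    Int.abs_lt_one_iff.mp (by exact_mod_cast hsmall)
  omega

theorem exists_distToInt_mul_eq {a b : ℤ} (hab : IsCoprime a b) {s : ℕ}
    (hsum : a + b = 2 * s + 1) :
    ∃ t : ℝ, distToInt (t * a) = s / (2 * s + 1) ∧ distToInt (t * b) = s / (2 * s + 1) := by
  obtain ⟨u, w, huw⟩ := hab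
  have hK : (0 : ℝ) < 2 * s + 1 := by positivity
  have hsumR : (a : ℝ) + b = 2 * s + 1 := by exact_mod_cast hsum
  have hmem : distToInt (s / (2 * s + 1)) = s / (2 * s + 1) :=
    distToInt_of_nonneg_of_le_half (by positivity) (by rw [div_le_iff₀ hK]; linarith)
  set t : ℝ := s * (u - w) / (2 * s + 1)
  -- `(u - w) a ≡ 1` and `b ≡ -a` modulo `2s + 1`
  have hta : t * a = s / (2 * s + 1) + ((-(s * w) : ℤ) : ℝ) := by
    have : (u : ℝ) * a + w * b = 1 := by exact_mod_cast huw
    simp only [t]; push_cast; field_simp; linear_combination s * this - s * w * hsumR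
  have htb : t * b = ((s * (u - w) : ℤ) : ℝ) - t * a := by
    simp only [t]; push_cast; field_simp; linear_combination s * (u - w) * hsumR
  refine ⟨t, ?_, ?_⟩
  · rw [hta, distToInt_add_intCast, hmem]
  · rw [htb, distToInt_intCast_sub, hta, distToInt_add_intCast, hmem]

theorem ciInf_fin_two {α : Type*} [ConditionallyCompleteLinearOrder α] (f : Fin 2 → α) :
    ⨅ i, f i = min (f 0) (f 1) :=
  have hf : BddBelow (Set.range f) := (Set.finite_range f).bddBelow
  le_antisymm (le_min (ciInf_le hf 0) (ciInf_le hf 1))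
    (le_ciInf (Fin.forall_fin_two.2 ⟨min_le_left _ _, min_le_right _ _⟩))

theorem ML_abs {n : ℕ} (v : Fin n → ℤ) : ML (fun i => |v i|) = ML v := by
  simp only [ML, distToInt_mul_abs]

theorem ML_mul_left {n : ℕ} (v : Fin n → ℤ) {g : ℤ} (hg : g ≠ 0) :
    ML (fun i => g * v i) = ML v := by
  simp only [ML, Int.cast_mul, ← mul_assoc]
  exact (mul_right_surjective₀ (by exact_mod_cast hg : (g : ℝ) ≠ 0)).iSup_comp
    fun t => ⨅ i, distToInt (t * v i)

theorem ML_fin_two_eq {v : Fin 2 → ℤ} {c : ℝ}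
    (hle : ∀ t : ℝ, min (distToInt (t * v 0)) (distToInt (t * v 1)) ≤ c)
    {t₀ : ℝ} (h₀ : distToInt (t₀ * v 0) = c) (h₁ : distToInt (t₀ * v 1) = c) : ML v = c := by
  simp only [ML, ciInf_fin_two]
  exact IsGreatest.csSup_eq
    ⟨⟨t₀, by simp only [h₀, h₁, min_self]⟩, by rintro _ ⟨t, rfl⟩; exact hle t⟩

theorem ML_of_odd_of_odd {a b : ℤ} (ha : Odd a) (hb : Odd b) : ML ![a, b] = 1 / 2 := by
  have hhalf {m : ℤ} (hm : Odd m) : distToInt (1 / 2 * m) = 1 / 2 := by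
    obtain ⟨k, rfl⟩ := hm
    rw [show 1 / 2 * ((2 * k + 1 : ℤ) : ℝ) = 1 / 2 + k by push_cast; ring, distToInt_add_intCast,
      distToInt_of_nonneg_of_le_half (by norm_num) le_rfl]
  exact ML_fin_two_eq (fun t => (min_le_left _ _).trans (distToInt_le_half _)) (hhalf ha) (hhalf hb)

theorem ML_of_coprime_of_add_eq {a b s : ℕ} (hab : a.Coprime b) (hsum : a + b = 2 * s + 1) :
    ML ![(a : ℤ), b] = s / (2 * s + 1) := by
  have hsumZ : (a : ℤ) + b = 2 * s + 1 := by exact_mod_cast hsum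
  obtain ⟨t₀, h₀, h₁⟩ := exists_distToInt_mul_eq (Nat.isCoprime_iff_coprime.mpr hab) hsumZ
  refine ML_fin_two_eq (fun t => ?_) h₀ h₁
  have hodd : Odd ((a : ℤ) + b) := hsumZ ▸ odd_two_mul_add_one _
  have hsumR : (a : ℝ) + b = 2 * s + 1 := by exact_mod_cast hsum
  calc _ ≤ 1 / 2 - 1 / (2 * (|((a : ℤ) : ℝ)| + |((b : ℤ) : ℝ)|)) := min_distToInt_mul_le hodd t
    _ = s / (2 * s + 1) := by
      simp only [Int.cast_natCast, Nat.abs_cast, hsumR]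
      field_simp
      ring

theorem odd_and_odd_or_odd_add_of_coprime {a b : ℕ} (hab : a.Coprime b) :
    (Odd a ∧ Odd b) ∨ Odd (a + b) := by
  rcases Nat.even_or_odd a with ha | ha <;> rcases Nat.even_or_odd b with hb | hb
  · exact absurd hab (Nat.not_coprime_of_dvd_of_dvd one_lt_two ha.two_dvd hb.two_dvd)
  · exact .inr (ha.add_odd hb)
  · exact .inr (ha.add_even hb)
  · exact .inl ⟨ha, hb⟩

theorem exists_coprime_ML_eq {v : Fin 2 → ℤ} (hv : ∀ i, v i ≠ 0) :
    ∃ a b : ℕ, 0 < a ∧ 0 < b ∧ a.Coprime b ∧ ML v = ML ![(a : ℤ), b] := by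
  obtain ⟨g, a, b, hg, hab, ha, hb⟩ :=
    Nat.exists_coprime' (Nat.gcd_pos_of_pos_left (v 1).natAbs (Int.natAbs_pos.mpr (hv 0)))
  have hscale : (fun i => |v i|) = fun i => (g : ℤ) * ![(a : ℤ), b] i := by
    refine funext (Fin.forall_fin_two.2 ⟨?_, ?_⟩) <;>
      simp only [← Int.natCast_natAbs, ha, hb, Matrix.cons_val_zero, Matrix.cons_val_one] <;>
      push_cast <;> ring
  refine ⟨a, b, Nat.pos_of_ne_zero ?_, Nat.pos_of_ne_zero ?_, hab, ?_⟩
  · rintro rfl; exact hv 0 (by simpa using ha)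
  · rintro rfl; exact hv 1 (by simpa using hb)
  · rw [← ML_abs, hscale, ML_mul_left _ (by exact_mod_cast hg.ne')]

theorem two_runner_spectrum :
    {d : ℝ | ∃ v : Fin 2 → ℤ, (∀ i, v i ≠ 0) ∧ ML v = d}
      = {1 / 2} ∪ {d : ℝ | ∃ s : ℕ, 1 ≤ s ∧ d = (s : ℝ) / (2 * s + 1)} := by
  ext d
  constructor
  · rintro ⟨v, hv, rfl⟩
    obtain ⟨a, b, ha, hb, hab, hML⟩ := exists_coprime_ML_eq hv
    rw [hML]
    rcases odd_and_odd_or_odd_add_of_coprime hab with ⟨ha', hb'⟩ | ⟨s, hs⟩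
    · exact .inl (ML_of_odd_of_odd ha'.natCast hb'.natCast)
    · exact .inr ⟨s, by omega, ML_of_coprime_of_add_eq hab hs⟩
  · rintro (rfl | ⟨s, hs, rfl⟩)
    · exact ⟨![1, 1], by simp, ML_of_odd_of_odd odd_one odd_one⟩
    · have hcop : s.Coprime (s + 1) := Nat.coprime_self_add_right.mpr (Nat.coprime_one_right s)
      exact ⟨![(s : ℤ), ((s + 1 : ℕ) : ℤ)],
        Fin.forall_fin_two.2 ⟨show (s : ℤ) ≠ 0 by omega, show ((s + 1 : ℕ) : ℤ) ≠ 0 by omega⟩,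
        ML_of_coprime_of_add_eq hcop (by ring)⟩
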